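/- arXiv:2404.11873 — 4 statements merged into one kernel-verified Lean document; each statement's English description precedes it below -/
import Mathlib

section
/- Let N be an odd integer and a, b integers with gcd(N, a, b) = 1. There exists an integer i with a + b ≡ -bi (mod N) and b ≡ ai (mod N) if and only if a² + ab + b² ≡ 0 (mod N). -/
/-!
If `b ≡ a i`, then `a (a + b + b i) ≡ a² + ab + b²`, so the two congruences give
`a² + ab + b² ≡ 0`. Conversely, any common divisor of `N` and `a` divides `b²`, hence divides `b`,
so `gcd(N, a, b) = 1` forces `a` to be invertible mod `N`; take `i ≡ b a⁻¹` and cancel `a`.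
-/

theorem isUnit_of_dvd_sq_add_mul_add_sq {R : Type*} [CommRing R] {d a b : R}
    (hda : d ∣ a) (hdb : IsCoprime d b) (hd : d ∣ a ^ 2 + a * b + b ^ 2) : IsUnit d := by
  have hbb : d ∣ b * b := by
    have := dvd_sub hd (hda.mul_right (a + b))
    rwa [show a ^ 2 + a * b + b ^ 2 - a * (a + b) = b * b by ring] at this
  exact hdb.isUnit_of_dvd' dvd_rfl (hdb.dvd_of_dvd_mul_left hbb)

theorem Int.isCoprime_of_gcd_gcd_eq_one_of_dvd {N a b : ℤ} (hgcd : Int.gcd N (Int.gcd a b) = 1)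
    (hN : N ∣ a ^ 2 + a * b + b ^ 2) : IsCoprime N a := by
  have hdb : IsCoprime (Int.gcd N a : ℤ) b := by
    rw [Int.isCoprime_iff_gcd_eq_one, Int.gcd_assoc]
    exact hgcd
  have hunit := isUnit_of_dvd_sq_add_mul_add_sq (Int.gcd_dvd_right N a) hdb
    ((Int.gcd_dvd_left N a).trans hN)
  rwa [Int.isCoprime_iff_gcd_eq_one, ← Nat.isUnit_iff, ← Int.ofNat_isUnit]

theorem Int.ModEq.cancel_left_of_isCoprime {m c a b : ℤ} (hc : IsCoprime m c)
    (h : c * a ≡ c * b [ZMOD m]) : a ≡ b [ZMOD m] := by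
  rw [Int.modEq_iff_dvd] at h ⊢
  exact hc.dvd_of_dvd_mul_left (by rwa [mul_sub])

theorem Int.exists_modEq_mul_of_isCoprime {m a : ℤ} (h : IsCoprime m a) (b : ℤ) :
    ∃ i, b ≡ a * i [ZMOD m] := by
  obtain ⟨u, v, huv⟩ := h
  exact ⟨v * b, Int.modEq_iff_dvd.mpr ⟨-(u * b), by linear_combination b * huv⟩⟩

theorem fermat_quotient_beta_descent_criterion_general (N a b : ℤ)
    (hgcd : Int.gcd N (Int.gcd a b) = 1) :
    (∃ i : ℤ, a + b ≡ -(b * i) [ZMOD N] ∧ b ≡ a * i [ZMOD N]) ↔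
      a ^ 2 + a * b + b ^ 2 ≡ 0 [ZMOD N] := by
  constructor
  · rintro ⟨i, hsum, hi⟩
    calc a ^ 2 + a * b + b ^ 2 = a * (a + b) + b * b := by ring
      _ ≡ a * -(b * i) + b * (a * i) [ZMOD N] := (hsum.mul_left a).add (hi.mul_left b)
      _ = 0 := by ring
  · intro h
    have hNa := Int.isCoprime_of_gcd_gcd_eq_one_of_dvd hgcd (Int.modEq_zero_iff_dvd.mp h)
    obtain ⟨i, hi⟩ := Int.exists_modEq_mul_of_isCoprime hNa b
    refine ⟨i, Int.ModEq.cancel_left_of_isCoprime hNa ?_, hi⟩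
    calc a * (a + b) = (a ^ 2 + a * b + b ^ 2) - b * b := by ring
      _ ≡ 0 - b * b [ZMOD N] := h.sub_right _
      _ = -(b * b) := by ring
      _ ≡ -(b * (a * i)) [ZMOD N] := (hi.mul_left b).neg
      _ = a * -(b * i) := by ring

/-- Let `N` be odd, `gcd(N, a, b) = 1`. There exists an integer `i` with
`a + b ≡ -b*i (mod N)` and `b ≡ a*i (mod N)` iff `a² + ab + b² ≡ 0 (mod N)`. -/
theorem fermat_quotient_beta_descent_criterion (N a b : ℤ) (hN : Odd N)
    (hgcd : Int.gcd N (Int.gcd a b) = 1) :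
    (∃ i : ℤ, a + b ≡ -(b * i) [ZMOD N] ∧ b ≡ a * i [ZMOD N]) ↔
      a ^ 2 + a * b + b ^ 2 ≡ 0 [ZMOD N] :=
  fermat_quotient_beta_descent_criterion_general N a b hgcd
end

section
/- Let N be an integer with gcd(N, 6) = 1, let ξ_6 = exp(πi/3) be a primitive 6th root of unity, and let β(u:v:w) = (-v:w:u) be the order-3 automorphism of the Fermat curve F_N: u^N + v^N = w^N. Then the fixed points of β on F_N are exactly S = (ζ_6 : ζ_6^{-1} : 1) and S̄ = (ζ_6^{-1} : ζ_6 : 1), where ζ_6 is a primitive 6th root of unity. -/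
/-!
If `β p = c • p` with `p = (u, v, w) ≠ 0`, then `u = c w`, `v = c⁻¹ w` and `c³ = -1`, so the
projective fixed points of `β` are the three points `(c : c⁻¹ : 1)` with `c ∈ {-1, ζ₆, ζ₆⁻¹}`.
The point `(-1 : -1 : 1)` does not lie on `F_N` since `N` is odd, leaving `S` and `S̄`.
-/

theorem IsPrimitiveRoot.sq_sub_self_add_one_eq_zero {K : Type*} [CommRing K] [IsDomain K]
    {ζ : K} (h : IsPrimitiveRoot ζ 6) : ζ ^ 2 - ζ + 1 = 0 := by
  simpa [Polynomial.cyclotomic_six] using (h.isRoot_cyclotomic (by norm_num)).eq_zero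

theorem IsPrimitiveRoot.pow_three_eq_neg_one_iff {K : Type*} [Field K] {ζ : K}
    (h : IsPrimitiveRoot ζ 6) {c : K} : c ^ 3 = -1 ↔ c = -1 ∨ c = ζ ∨ c = ζ⁻¹ := by
  have hζ : ζ ≠ 0 := h.ne_zero (by norm_num)
  have hq := h.sq_sub_self_add_one_eq_zero
  -- `ζ` and `ζ⁻¹` are the two roots of `X² - X + 1`.
  have hfactor : c ^ 3 + 1 = (c + 1) * ((c - ζ) * (c - ζ⁻¹)) := by
    field_simp
    linear_combination (c ^ 2 + c) * hq
  rw [← add_eq_zero_iff_eq_neg, hfactor]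
  simp only [mul_eq_zero, add_eq_zero_iff_eq_neg, sub_eq_zero]

theorem exists_smul_eq_beta_iff {K : Type*} [Field K] {p : K × K × K} (hp0 : p ≠ 0) :
    (∃ c : K, c ≠ 0 ∧ (-p.2.1, p.2.2, p.1) = c • p) ↔
      ∃ c t : K, c ^ 3 = -1 ∧ t ≠ 0 ∧ p = t • (c, c⁻¹, 1) := by
  obtain ⟨u, v, w⟩ := p
  simp only [Prod.smul_mk, smul_eq_mul, Prod.mk.injEq, mul_one]
  constructor
  · rintro ⟨c, hc, hv, hw, hu⟩
    have hw0 : w ≠ 0 := by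
      intro hw0
      have hu0 : u = 0 := by rw [hu, hw0, mul_zero]
      have hv0 : v = 0 := by rw [← neg_eq_zero, hv, hu0, mul_zero]
      exact hp0 (by simp [hu0, hv0, hw0])
    refine ⟨c, w, ?_, hw0, by linear_combination hu, ?_, rfl⟩
    · have : (c ^ 3 + 1) * w = 0 := by linear_combination -c ^ 2 * hu - c * hv + hw
      linear_combination (mul_eq_zero.1 this).resolve_right hw0
    · field_simp
      linear_combination -hw
  · rintro ⟨c, t, hc3, ht, rfl, rfl, rfl⟩
    have hc : c ≠ 0 := by rintro rfl; norm_num at hc3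
    refine ⟨c, hc, ?_, by field_simp, by ring⟩
    field_simp
    exact hc3.symm

theorem neg_pow_add_neg_pow_ne_pow_of_odd {K : Type*} [Field K] (h3 : (3 : K) ≠ 0) {N : ℕ}
    (hN : Odd N) {t : K} (ht : t ≠ 0) :
    (-t) ^ N + (-t) ^ N ≠ t ^ N := by
  rw [hN.neg_pow]
  intro h
  have : (3 : K) * t ^ N = 0 := by linear_combination -h
  exact pow_ne_zero N ht ((mul_eq_zero.1 this).resolve_left h3)

/-- For `gcd(N, 6) = 1`, the fixed points of `β(u:v:w) = (-v:w:u)` on the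
Fermat curve `u^N + v^N = w^N` are exactly `S = (ζ₆ : ζ₆⁻¹ : 1)` and
`S̄ = (ζ₆⁻¹ : ζ₆ : 1)`.  In homogeneous coordinates, a nonzero `p` on the curve is a
projective fixed point of `β` (i.e. `β p = c • p` for some scalar `c ≠ 0`) if and only if
`p` is a nonzero scalar multiple of `S` or of `S̄`. -/
theorem fixed_points_of_beta_on_fermat (N : ℕ) (hN : Nat.gcd N 6 = 1)
    (ζ₆ : ℂ) (h₆ : IsPrimitiveRoot ζ₆ 6)
    (p : ℂ × ℂ × ℂ) (hp0 : p ≠ 0) (hpF : p.1 ^ N + p.2.1 ^ N = p.2.2 ^ N) :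
    (∃ c : ℂ, c ≠ 0 ∧ (-p.2.1, p.2.2, p.1) = c • p) ↔
      (∃ t : ℂ, t ≠ 0 ∧
        (p = t • ((ζ₆, ζ₆⁻¹, 1) : ℂ × ℂ × ℂ) ∨ p = t • ((ζ₆⁻¹, ζ₆, 1) : ℂ × ℂ × ℂ))) := by
  have hodd : Odd N := (Nat.Coprime.coprime_dvd_right (by norm_num : 2 ∣ 6) hN).odd_of_right
  rw [exists_smul_eq_beta_iff hp0]
  constructor
  · rintro ⟨c, t, hc3, ht, rfl⟩
    rcases h₆.pow_three_eq_neg_one_iff.1 hc3 with rfl | rfl | rfl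
    · exact absurd (by simpa using hpF) (neg_pow_add_neg_pow_ne_pow_of_odd (by norm_num) hodd ht)
    · exact ⟨t, ht, Or.inl rfl⟩
    · exact ⟨t, ht, Or.inr (by rw [inv_inv])⟩
  · rintro ⟨t, ht, rfl | rfl⟩
    · exact ⟨ζ₆, t, h₆.pow_three_eq_neg_one_iff.2 (Or.inr (Or.inl rfl)), ht, rfl⟩
    · exact ⟨ζ₆⁻¹, t, h₆.pow_three_eq_neg_one_iff.2 (Or.inr (Or.inr rfl)), ht, by rw [inv_inv]⟩
end

section
/- Let N > 3, a, b ∈ {1,...,N-1} with gcd(N, a, b) = 1, and suppose a² ≡ b² (mod N). Then there exists an integer i with a ≡ bi (mod N) and b ≡ ai (mod N); conversely, existence of such i implies a² ≡ b² (mod N). -/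
theorem sq_eq_sq_of_eq_mul_of_eq_mul {M : Type*} [CommMonoid M] {a b i : M}
    (ha : a = b * i) (hb : b = a * i) : a ^ 2 = b ^ 2 := by
  calc a ^ 2 = a * (b * i) := by rw [sq, ← ha]
    _ = b * (a * i) := by rw [mul_left_comm]
    _ = b ^ 2 := by rw [← hb, sq]

/-- The swapping factor is `i = u * b + v * a` for a Bézout relation `u * a + v * b = 1`. -/
theorem IsCoprime.exists_eq_mul_and_eq_mul_of_sq_eq_sq {R : Type*} [CommSemiring R] {a b : R}
    (hab : IsCoprime a b) (h : a ^ 2 = b ^ 2) : ∃ i, a = b * i ∧ b = a * i := by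
  obtain ⟨u, v, huv⟩ := hab
  refine ⟨u * b + v * a, ?_, ?_⟩
  · calc a = a * (u * a + v * b) := by rw [huv, mul_one]
      _ = u * a ^ 2 + v * (a * b) := by ring
      _ = b * (u * b + v * a) := by rw [h]; ring
  · calc b = b * (u * a + v * b) := by rw [huv, mul_one]
      _ = u * (a * b) + v * b ^ 2 := by ring
      _ = a * (u * b + v * a) := by rw [← h]; ring

theorem IsCoprime.sq_eq_sq_iff_exists_eq_mul_and_eq_mul {R : Type*} [CommSemiring R] {a b : R}
    (hab : IsCoprime a b) : a ^ 2 = b ^ 2 ↔ ∃ i, a = b * i ∧ b = a * i :=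
  ⟨hab.exists_eq_mul_and_eq_mul_of_sq_eq_sq,
    fun ⟨_, ha, hb⟩ ↦ sq_eq_sq_of_eq_mul_of_eq_mul ha hb⟩

theorem Int.modEq_iff_intCast_zmod_natAbs_eq {n a b : ℤ} :
    a ≡ b [ZMOD n] ↔ (a : ZMod n.natAbs) = b := by
  rw [ZMod.intCast_eq_intCast_iff, Int.modEq_natAbs]

theorem Int.isCoprime_intCast_zmod_natAbs_of_gcd_gcd_eq_one {n a b : ℤ}
    (h : Int.gcd n (Int.gcd a b) = 1) : IsCoprime (a : ZMod n.natAbs) (b : ZMod n.natAbs) := by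
  obtain ⟨s, t, hst⟩ := Int.isCoprime_iff_gcd_eq_one.mpr h
  have hn : (n : ZMod n.natAbs) = 0 := by
    rw [ZMod.intCast_zmod_eq_zero_iff_dvd, Int.natCast_natAbs, abs_dvd]
  have hst' := congrArg (Int.cast : ℤ → ZMod n.natAbs) hst
  rw [Int.gcd_eq_gcd_ab] at hst'
  push_cast at hst'
  exact ⟨t * a.gcdA b, t * a.gcdB b, by linear_combination hst' - s * hn⟩

theorem fermat_quotient_alpha_descent_criterion_general (N a b : ℤ)
    (hgcd : Int.gcd N (Int.gcd a b) = 1) :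
    a ^ 2 ≡ b ^ 2 [ZMOD N] ↔
      ∃ i : ℤ, a ≡ b * i [ZMOD N] ∧ b ≡ a * i [ZMOD N] := by
  have hab := Int.isCoprime_intCast_zmod_natAbs_of_gcd_gcd_eq_one hgcd
  simp only [Int.modEq_iff_intCast_zmod_natAbs_eq, Int.cast_pow, Int.cast_mul]
  rw [hab.sq_eq_sq_iff_exists_eq_mul_and_eq_mul, ZMod.intCast_surjective.exists]

/-- For `N > 3`, `a, b ∈ {1, …, N-1}` with `gcd(N, a, b) = 1`:
`a² ≡ b² (mod N)` holds if and only if there is an integer `i` with `a ≡ bi (mod N)`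
and `b ≡ ai (mod N)` (criterion for the order-2 automorphism `α` to descend). -/
theorem fermat_quotient_alpha_descent_criterion (N a b : ℤ) (hN : 3 < N)
    (ha : 1 ≤ a ∧ a ≤ N - 1) (hb : 1 ≤ b ∧ b ≤ N - 1)
    (hgcd : Int.gcd N (Int.gcd a b) = 1) :
    a ^ 2 ≡ b ^ 2 [ZMOD N] ↔
      ∃ i : ℤ, a ≡ b * i [ZMOD N] ∧ b ≡ a * i [ZMOD N] :=
  fermat_quotient_alpha_descent_criterion_general N a b hgcd
end

section
/- Let X be a smooth projective curve of genus g over C, let H¹ = H¹(X, Z), and let {e_i, f_i : 1 ≤ i ≤ g} be a symplectic basis of H¹ with respect to the cup product pairing. For 1 ≤ k ≤ g - 2, let φ₁, φ₂, φ₃ ∈ {e_i, f_i : 1 ≤ i ≤ 3} and set φ_{2i+2} = e_{i+3}, φ_{2i+3} = f_{i+3} for 1 ≤ i ≤ k-1. Then the sum over permutations σ ∈ S_{2k+1} satisfying σ(1) < σ(2) < σ(3), σ(2i+2) < σ(2i+3) for 1 ≤ i ≤ k-1, and σ(2i+2) < σ(2i+4) for 1 ≤ i ≤ k-2, of the product ∏_{i=1}^{k-1}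 ⟨φ_{σ(2i+2)}, φ_{σ(2i+3)}⟩ times the indicator that {σ(1), σ(2), σ(3)} = {1, 2, 3}, equals 1; more precisely, the only permutation σ in this sum for which all pairings ⟨φ_{σ(2i+2)}, φ_{σ(2i+3)}⟩ are nonzero is the identity. -/
/-! Positions `3, …, 2k` carry the pairs `e_j, f_j` with `j ≥ 4`, and these pair nontrivially
only with each other. The set condition forces `σ` to fix the positions `0, 1, 2`, so `σ` permutes
the positions `≥ 3`; a nonzero product then forces `σ` to map each block `{2i+1, 2i+2}` onto a
block, in order. The resulting map on blocks is increasing by the chain condition, hence the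
identity. -/

theorem eq_of_finset_triple_eq {α : Type*} [LinearOrder α] {a b c x y z : α} (hab : a < b)
    (hbc : b < c) (hxy : x < y) (hyz : y < z) (h : ({x, y, z} : Finset α) = {a, b, c}) :
    x = a ∧ y = b ∧ z = c := by
  have mem_abc : ∀ t ∈ ({x, y, z} : Finset α), t = a ∨ t = b ∨ t = c := by
    intro t ht
    simpa [h] using ht
  have mem_xyz : ∀ t ∈ ({a, b, c} : Finset α), t = x ∨ t = y ∨ t = z := by
    intro t ht
    simpa [← h] using ht
  have := mem_abc x (by simp)
  have := mem_abc y (by simp)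
  have := mem_abc z (by simp)
  have := mem_xyz a (by simp)
  have := mem_xyz c (by simp)
  grind

theorem eqOn_id_of_mapsTo_Icc_of_lt_succ {f : ℕ → ℕ} {a b : ℕ}
    (hmaps : Set.MapsTo f (Set.Icc a b) (Set.Icc a b)) (hf : ∀ i, a ≤ i → i < b → f i < f (i + 1)) :
    Set.EqOn f id (Set.Icc a b) := by
  have le_apply : ∀ i, a ≤ i → i ≤ b → i ≤ f i := by
    intro i hai
    induction i, hai using Nat.le_induction with
    | base => exact fun hab => (hmaps ⟨le_rfl, hab⟩).1
    | succ i hai ih => exact fun hib => (ih (by omega)).trans_lt (hf i hai (by omega))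
  have apply_le : ∀ d i, a ≤ i → i + d = b → f i ≤ i := by
    intro d
    induction d with
    | zero => exact fun i hai hib => (hmaps ⟨hai, by omega⟩).2.trans (by omega)
    | succ d ih =>
      intro i hai hib
      have := ih (i + 1) (by omega) (by omega)
      have := hf i hai (by omega)
      omega
  exact fun i hi => le_antisymm (apply_le _ i hi.1 (Nat.add_sub_cancel' hi.2)) (le_apply i hi.1 hi.2)

theorem Equiv.Perm.le_val_apply_of_forall_lt {n m : ℕ} (σ : Equiv.Perm (Fin n))
    (hσ : ∀ p : Fin n, (p : ℕ) < m → σ p = p) {p : Fin n} (hp : m ≤ (p : ℕ)) : m ≤ (σ p : ℕ) := by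
  by_contra! h
  rw [σ.injective (hσ (σ p) h)] at h
  omega

/-- The cup product on `H¹`, with `(i, false) = e_i` and `(i, true) = f_i`. -/
def symplecticPairing (x y : ℕ × Bool) : ℤ :=
  if x.2 = false ∧ y.2 = true ∧ x.1 = y.1 then 1
  else if x.2 = true ∧ y.2 = false ∧ x.1 = y.1 then -1 else 0

theorem symplecticPairing_e_f (i : ℕ) : symplecticPairing (i, false) (i, true) = 1 := by
  simp [symplecticPairing]

theorem fst_eq_of_symplecticPairing_ne_zero {x y : ℕ × Bool} (h : symplecticPairing x y ≠ 0) :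
    x.1 = y.1 := by
  unfold symplecticPairing at h
  split_ifs at h with h₁ h₂
  exacts [h₁.2.2, h₂.2.2, absurd rfl h]

section CeresaPositions

variable {k : ℕ} {idx : ℕ → Fin (2 * k + 1)} {φ : Fin (2 * k + 1) → ℕ × Bool}

theorem fst_apply_eq_of_three_le (hidx : ∀ m < 2 * k + 1, (idx m : ℕ) = m)
    (hφ : ∀ i : ℕ, 1 ≤ i → i ≤ k - 1 →
      φ (idx (2 * i + 1)) = (i + 3, false) ∧ φ (idx (2 * i + 2)) = (i + 3, true))
    {p : Fin (2 * k + 1)} (hp : 3 ≤ (p : ℕ)) : (φ p).1 = ((p : ℕ) - 1) / 2 + 3 := by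
  have hp_lt := p.isLt
  obtain ⟨j, hj | hj⟩ := Nat.even_or_odd' (p : ℕ)
  · have hp_idx : p = idx (2 * (j - 1) + 2) := Fin.ext (by rw [hidx _ (by omega)]; omega)
    rw [hp_idx, (hφ (j - 1) (by omega) (by omega)).2]
    omega
  · have hp_idx : p = idx (2 * j + 1) := Fin.ext (by rw [hidx _ (by omega)]; omega)
    rw [hp_idx, (hφ j (by omega) (by omega)).1]
    omega

theorem val_eq_of_symplecticPairing_ne_zero (hidx : ∀ m < 2 * k + 1, (idx m : ℕ) = m)
    (hφ : ∀ i : ℕ, 1 ≤ i → i ≤ k - 1 →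
      φ (idx (2 * i + 1)) = (i + 3, false) ∧ φ (idx (2 * i + 2)) = (i + 3, true))
    {p q : Fin (2 * k + 1)} (hp : 3 ≤ (p : ℕ)) (hq : 3 ≤ (q : ℕ)) (hpq : p < q)
    (h : symplecticPairing (φ p) (φ q) ≠ 0) : (p : ℕ) % 2 = 1 ∧ (q : ℕ) = p + 1 := by
  have hfst := fst_eq_of_symplecticPairing_ne_zero h
  rw [fst_apply_eq_of_three_le hidx hφ hp, fst_apply_eq_of_three_le hidx hφ hq] at hfst
  rw [Fin.lt_def] at hpq
  omega

theorem apply_eq_self_of_val_lt_three (hidx : ∀ m < 2 * k + 1, (idx m : ℕ) = m)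
    (σ : Equiv.Perm (Fin (2 * k + 1))) (h01 : σ (idx 0) < σ (idx 1)) (h12 : σ (idx 1) < σ (idx 2))
    (hset : ({σ (idx 0), σ (idx 1), σ (idx 2)} : Finset (Fin (2 * k + 1))) =
      {idx 0, idx 1, idx 2})
    (p : Fin (2 * k + 1)) (hp : (p : ℕ) < 3) : σ p = p := by
  have hk : 2 ≤ 2 * k := by
    have := h01.trans h12
    rw [Fin.lt_def] at this
    omega
  have idx_lt : ∀ m < 2, idx m < idx (m + 1) := fun m hm => by
    rw [Fin.lt_def, hidx _ (by omega), hidx _ (by omega)]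
    omega
  obtain ⟨h0, h1, h2⟩ :=
    eq_of_finset_triple_eq (idx_lt 0 (by omega)) (idx_lt 1 (by omega)) h01 h12 hset
  obtain ⟨m, hm, rfl⟩ : ∃ m < 3, p = idx m := ⟨p, hp, Fin.ext (hidx p p.isLt).symm⟩
  interval_cases m <;> assumption

theorem eq_refl_of_symplecticPairing_ne_zero (hidx : ∀ m < 2 * k + 1, (idx m : ℕ) = m)
    (hφ : ∀ i : ℕ, 1 ≤ i → i ≤ k - 1 →
      φ (idx (2 * i + 1)) = (i + 3, false) ∧ φ (idx (2 * i + 2)) = (i + 3, true))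
    (σ : Equiv.Perm (Fin (2 * k + 1)))
    (h01 : σ (idx 0) < σ (idx 1)) (h12 : σ (idx 1) < σ (idx 2))
    (hpairs : ∀ i : ℕ, 1 ≤ i → i ≤ k - 1 → σ (idx (2 * i + 1)) < σ (idx (2 * i + 2)))
    (hchain : ∀ i : ℕ, 1 ≤ i → i ≤ k - 2 → σ (idx (2 * i + 1)) < σ (idx (2 * i + 3)))
    (hset : ({σ (idx 0), σ (idx 1), σ (idx 2)} : Finset (Fin (2 * k + 1))) =
      {idx 0, idx 1, idx 2})
    (hne : ∀ i : ℕ, 1 ≤ i → i ≤ k - 1 →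
      symplecticPairing (φ (σ (idx (2 * i + 1)))) (φ (σ (idx (2 * i + 2)))) ≠ 0) :
    σ = Equiv.refl (Fin (2 * k + 1)) := by
  have idx_val (p : Fin (2 * k + 1)) : idx p = p := Fin.ext (hidx p p.isLt)
  have fix_lt_three := apply_eq_self_of_val_lt_three hidx σ h01 h12 hset
  have three_le_apply (p : Fin (2 * k + 1)) (hp : 3 ≤ (p : ℕ)) : 3 ≤ (σ p : ℕ) :=
    σ.le_val_apply_of_forall_lt fix_lt_three hp
  set τ : ℕ → ℕ := fun i => ((σ (idx (2 * i + 1)) : ℕ) - 1) / 2 with hτ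
  have block : ∀ i, 1 ≤ i → i ≤ k - 1 → τ i ∈ Set.Icc 1 (k - 1) ∧
      (σ (idx (2 * i + 1)) : ℕ) = 2 * τ i + 1 ∧ (σ (idx (2 * i + 2)) : ℕ) = 2 * τ i + 2 := by
    intro i hi₁ hi₂
    have hp := three_le_apply (idx (2 * i + 1)) (by rw [hidx _ (by omega)]; omega)
    have hq := three_le_apply (idx (2 * i + 2)) (by rw [hidx _ (by omega)]; omega)
    have := val_eq_of_symplecticPairing_ne_zero hidx hφ hp hq (hpairs i hi₁ hi₂) (hne i hi₁ hi₂)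
    have := (σ (idx (2 * i + 2))).isLt
    simp only [hτ, Set.mem_Icc]
    omega
  have τ_eq : Set.EqOn τ id (Set.Icc 1 (k - 1)) := by
    refine eqOn_id_of_mapsTo_Icc_of_lt_succ (fun i hi => (block i hi.1 hi.2).1) fun i hi₁ hi₂ => ?_
    have := hchain i hi₁ (by omega)
    rw [Fin.lt_def] at this
    have := (block i hi₁ (by omega)).2.1
    have := (block (i + 1) (by omega) hi₂).2.1
    rw [show 2 * (i + 1) + 1 = 2 * i + 3 by ring] at this
    omega
  refine Equiv.ext fun p => ?_
  rw [Equiv.refl_apply, ← idx_val p]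
  by_cases hp : (p : ℕ) < 3
  · rw [idx_val]
    exact fix_lt_three p hp
  set j := ((p : ℕ) - 1) / 2
  have := p.isLt
  obtain ⟨-, hodd, heven⟩ := block j (by omega) (by omega)
  have hτj : τ j = j := τ_eq ⟨by omega, by omega⟩
  rcases (show (p : ℕ) = 2 * j + 1 ∨ (p : ℕ) = 2 * j + 2 by omega) with h | h <;>
    rw [h] <;> exact Fin.ext (by rw [hidx _ (by omega)]; omega)

end CeresaPositions

theorem ceresa_reduction_combinatorial_identity_general (k : ℕ) (hk : 1 ≤ k)
    (φ : Fin (2 * k + 1) → ℕ × Bool)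
    (pair : ℕ × Bool → ℕ × Bool → ℤ)
    (hpair : pair = fun x y =>
      if x.2 = false ∧ y.2 = true ∧ x.1 = y.1 then 1
      else if x.2 = true ∧ y.2 = false ∧ x.1 = y.1 then -1 else 0)
    (idx : ℕ → Fin (2 * k + 1))
    (hidx : idx = fun m => ⟨m % (2 * k + 1), Nat.mod_lt m (Nat.succ_pos _)⟩)
    (hφrest : ∀ i : ℕ, 1 ≤ i → i ≤ k - 1 →
      φ (idx (2 * i + 1)) = (i + 3, false) ∧ φ (idx (2 * i + 2)) = (i + 3, true)) :
    (∑ σ : Equiv.Perm (Fin (2 * k + 1)),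
        if (σ (idx 0) < σ (idx 1) ∧ σ (idx 1) < σ (idx 2) ∧
            (∀ i : ℕ, 1 ≤ i → i ≤ k - 1 → σ (idx (2 * i + 1)) < σ (idx (2 * i + 2))) ∧
            (∀ i : ℕ, 1 ≤ i → i ≤ k - 2 → σ (idx (2 * i + 1)) < σ (idx (2 * i + 3))) ∧
            ({σ (idx 0), σ (idx 1), σ (idx 2)} : Finset (Fin (2 * k + 1))) =
              {idx 0, idx 1, idx 2})
        then ∏ i ∈ Finset.Icc 1 (k - 1),
          pair (φ (σ (idx (2 * i + 1)))) (φ (σ (idx (2 * i + 2))))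
        else 0) = 1 ∧
    (∀ σ : Equiv.Perm (Fin (2 * k + 1)),
        σ (idx 0) < σ (idx 1) → σ (idx 1) < σ (idx 2) →
        (∀ i : ℕ, 1 ≤ i → i ≤ k - 1 → σ (idx (2 * i + 1)) < σ (idx (2 * i + 2))) →
        (∀ i : ℕ, 1 ≤ i → i ≤ k - 2 → σ (idx (2 * i + 1)) < σ (idx (2 * i + 3))) →
        ({σ (idx 0), σ (idx 1), σ (idx 2)} : Finset (Fin (2 * k + 1))) =
          {idx 0, idx 1, idx 2} →
        (∀ i : ℕ, 1 ≤ i → i ≤ k - 1 →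
          pair (φ (σ (idx (2 * i + 1)))) (φ (σ (idx (2 * i + 2)))) ≠ 0) →
        σ = Equiv.refl (Fin (2 * k + 1))) := by
  obtain rfl : pair = symplecticPairing := hpair
  have hidx_val : ∀ m < 2 * k + 1, (idx m : ℕ) = m := fun m hm => by
    subst hidx
    exact Nat.mod_eq_of_lt hm
  have idx_lt : ∀ m m', m < m' → m' < 2 * k + 1 → idx m < idx m' := fun m m' h h' => by
    rw [Fin.lt_def, hidx_val _ (by omega), hidx_val _ h']
    exact h
  have uniq := eq_refl_of_symplecticPairing_ne_zero hidx_val hφrest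
  refine ⟨?_, uniq⟩
  rw [Finset.sum_eq_single (Equiv.refl _) ?_ (by simp), if_pos]
  · refine Finset.prod_eq_one fun i hi => ?_
    rw [Finset.mem_Icc] at hi
    rw [Equiv.refl_apply, Equiv.refl_apply, (hφrest i hi.1 hi.2).1, (hφrest i hi.1 hi.2).2,
      symplecticPairing_e_f]
  · exact ⟨idx_lt 0 1 (by omega) (by omega), idx_lt 1 2 (by omega) (by omega),
      fun i _ hi => idx_lt _ _ (by omega) (by omega),
      fun i _ hi => idx_lt _ _ (by omega) (by omega), rfl⟩
  · intro σ _ hσ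
    rw [ite_eq_right_iff]
    rintro ⟨h01, h12, hpairs, hchain, hset⟩
    by_contra hprod
    exact hσ (uniq σ h01 h12 hpairs hchain hset fun i hi₁ hi₂ =>
      Finset.prod_ne_zero_iff.mp hprod i (Finset.mem_Icc.mpr ⟨hi₁, hi₂⟩))

/-- The combinatorial identity underlying the reduction from the `k`-th
Ceresa cycle to the case `k = 1`.  The symplectic basis `{e_i, f_i : 1 ≤ i ≤ g}` of
`H¹(X, ℤ)` is encoded as pairs `(i, false) = e_i`, `(i, true) = f_i`, with the cup
product pairing `⟨e_i, f_j⟩ = δ_{ij} = -⟨f_j, e_i⟩`, `⟨e_i, e_j⟩ = ⟨f_i, f_j⟩ = 0`.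
Positions `1, …, 2k+1` of the paper are encoded as `Fin (2k+1)` via `j ↦ j - 1`.
Given `φ₁, φ₂, φ₃ ∈ {e_i, f_i : i ≤ 3}` and `φ_{2i+2} = e_{i+3}`, `φ_{2i+3} = f_{i+3}`
for `1 ≤ i ≤ k-1`, the sum over permutations `σ` with `σ(1) < σ(2) < σ(3)`,
`σ(2i+2) < σ(2i+3)` (`1 ≤ i ≤ k-1`), `σ(2i+2) < σ(2i+4)` (`1 ≤ i ≤ k-2`) of
`∏_{i=1}^{k-1} ⟨φ_{σ(2i+2)}, φ_{σ(2i+3)}⟩` times the indicator of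
`{σ(1), σ(2), σ(3)} = {1, 2, 3}` equals `1`; moreover the only such `σ` with all
pairings nonzero is the identity. -/
theorem ceresa_reduction_combinatorial_identity (g k : ℕ) (hk : 1 ≤ k) (hkg : k ≤ g - 2)
    (φ : Fin (2 * k + 1) → ℕ × Bool)
    (pair : ℕ × Bool → ℕ × Bool → ℤ)
    (hpair : pair = fun x y =>
      if x.2 = false ∧ y.2 = true ∧ x.1 = y.1 then 1
      else if x.2 = true ∧ y.2 = false ∧ x.1 = y.1 then -1 else 0)
    (idx : ℕ → Fin (2 * k + 1))
    (hidx : idx = fun m => ⟨m % (2 * k + 1), Nat.mod_lt m (Nat.succ_pos _)⟩)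
    (hφg : ∀ j : Fin (2 * k + 1), 1 ≤ (φ j).1 ∧ (φ j).1 ≤ g)
    (hφ123 : ∀ j : Fin (2 * k + 1), (j : ℕ) < 3 → (φ j).1 ≤ 3)
    (hφrest : ∀ i : ℕ, 1 ≤ i → i ≤ k - 1 →
      φ (idx (2 * i + 1)) = (i + 3, false) ∧ φ (idx (2 * i + 2)) = (i + 3, true)) :
    (∑ σ : Equiv.Perm (Fin (2 * k + 1)),
        if (σ (idx 0) < σ (idx 1) ∧ σ (idx 1) < σ (idx 2) ∧
            (∀ i : ℕ, 1 ≤ i → i ≤ k - 1 → σ (idx (2 * i + 1)) < σ (idx (2 * i + 2))) ∧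
            (∀ i : ℕ, 1 ≤ i → i ≤ k - 2 → σ (idx (2 * i + 1)) < σ (idx (2 * i + 3))) ∧
            ({σ (idx 0), σ (idx 1), σ (idx 2)} : Finset (Fin (2 * k + 1))) =
              {idx 0, idx 1, idx 2})
        then ∏ i ∈ Finset.Icc 1 (k - 1),
          pair (φ (σ (idx (2 * i + 1)))) (φ (σ (idx (2 * i + 2))))
        else 0) = 1 ∧
    (∀ σ : Equiv.Perm (Fin (2 * k + 1)),
        σ (idx 0) < σ (idx 1) → σ (idx 1) < σ (idx 2) →
        (∀ i : ℕ, 1 ≤ i → i ≤ k - 1 → σ (idx (2 * i + 1)) < σ (idx (2 * i + 2))) →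
        (∀ i : ℕ, 1 ≤ i → i ≤ k - 2 → σ (idx (2 * i + 1)) < σ (idx (2 * i + 3))) →
        ({σ (idx 0), σ (idx 1), σ (idx 2)} : Finset (Fin (2 * k + 1))) =
          {idx 0, idx 1, idx 2} →
        (∀ i : ℕ, 1 ≤ i → i ≤ k - 1 →
          pair (φ (σ (idx (2 * i + 1)))) (φ (σ (idx (2 * i + 2)))) ≠ 0) →
        σ = Equiv.refl (Fin (2 * k + 1))) :=
  ceresa_reduction_combinatorial_identity_general k hk φ pair hpair idx hidx hφrest
end
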